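/- Let A, Q, Y', Y'', X_{W'}, X_{W''} be discrete random variables with H(X_{W'} | A, Q, Y') = 0, H(X_{W''} | A, Q, Y'') = 0, X_{W'} independent of (Q, Y', Y''), and X_{W''} independent of (Q, X_{W'}, Y', Y''). Then H(A) ≥ H(X_{W'}) + H(X_{W''}). -/
import Mathlib


open scoped BigOperators

/-- Probability that the discrete random variable `X` (on a finite probability
space with weights `μ`) takes the value `a`. -/
noncomputable def pr {Ω α : Type*} [Fintype Ω] (μ : Ω → ℝ) [DecidableEq α]
    (X : Ω → α) (a : α) : ℝ :=
  ∑ ω, if X ω = a then μ ω else 0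

/-- Shannon entropy (in bits) of the discrete random variable `X`. -/
noncomputable def entH {Ω α : Type*} [Fintype Ω] [Fintype α] [DecidableEq α]
    (μ : Ω → ℝ) (X : Ω → α) : ℝ :=
  -∑ a, pr μ X a * Real.logb 2 (pr μ X a)

/-- Conditional Shannon entropy `H(X | Y) = H(X, Y) - H(Y)`. -/
noncomputable def condH {Ω α β : Type*} [Fintype Ω] [Fintype α] [DecidableEq α]
    [Fintype β] [DecidableEq β] (μ : Ω → ℝ) (X : Ω → α) (Y : Ω → β) : ℝ :=
  entH μ (fun ω => (X ω, Y ω)) - entH μ Y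

/-- `X` and `Y` are independent random variables. -/
def IndepRV {Ω α β : Type*} [Fintype Ω] [DecidableEq α] [DecidableEq β]
    (μ : Ω → ℝ) (X : Ω → α) (Y : Ω → β) : Prop :=
  ∀ a b, pr μ (fun ω => (X ω, Y ω)) (a, b) = pr μ X a * pr μ Y b

/-- `μ` is a probability mass function on the finite sample space `Ω`. -/
def IsPMF {Ω : Type*} [Fintype Ω] (μ : Ω → ℝ) : Prop :=
  (∀ ω, 0 ≤ μ ω) ∧ ∑ ω, μ ω = 1


set_option linter.unusedSectionVars false

section EntropyToolkit
variable {Ω α β γ : Type*} [Fintype Ω] {μ : Ω → ℝ} [Fintype α] [DecidableEq α]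
  [Fintype β] [DecidableEq β] [Fintype γ] [DecidableEq γ]

lemma pr_nonneg [DecidableEq α] (h : ∀ ω, 0 ≤ μ ω) (X : Ω → α) (a : α) :
    0 ≤ pr μ X a := by
  apply Finset.sum_nonneg
  intro ω _
  split_ifs
  · exact h ω
  · exact le_refl 0

lemma sum_pr [DecidableEq α] [Fintype α] (X : Ω → α) :
    ∑ a, pr μ X a = ∑ ω, μ ω := by
  unfold pr
  rw [Finset.sum_comm]
  simp

lemma pr_comp [DecidableEq α] [Fintype α] [DecidableEq β] (X : Ω → α) (f : α → β) (b : β) :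
    pr μ (fun ω => f (X ω)) b = ∑ a, if f a = b then pr μ X a else 0 := by
  unfold pr
  have : ∀ a : α, (if f a = b then ∑ ω : Ω, if X ω = a then μ ω else 0 else 0)
      = ∑ ω : Ω, if X ω = a then (if f a = b then μ ω else 0) else 0 := by
    intro a
    split_ifs with h1
    · simp [h1]
    · simp [h1]
  simp only [this]
  rw [Finset.sum_comm]
  apply Finset.sum_congr rfl
  intro ω _
  rw [Finset.sum_ite_eq Finset.univ (X ω) (fun a => if f a = b then μ ω else 0)]
  simp

lemma pr_le_pr_comp [DecidableEq α] [DecidableEq β] (h : ∀ ω, 0 ≤ μ ω)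
    (X : Ω → α) (f : α → β) (a : α) :
    pr μ X a ≤ pr μ (fun ω => f (X ω)) (f a) := by
  apply Finset.sum_le_sum
  intro ω _
  by_cases h1 : X ω = a
  · simp [h1]
  · split_ifs with h2
    · exact h ω
    · exact le_refl 0

lemma entH_comp (X : Ω → α) (f : α → β) :
    entH μ (fun ω => f (X ω)) =
      -∑ a, pr μ X a * Real.logb 2 (pr μ (fun ω => f (X ω)) (f a)) := by
  unfold entH
  congr 1
  calc ∑ b, pr μ (fun ω => f (X ω)) b * Real.logb 2 (pr μ (fun ω => f (X ω)) b)
      = ∑ b, ∑ a, (if f a = b then pr μ X a else 0) * Real.logb 2 (pr μ (fun ω => f (X ω)) b) := by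
        simp only [pr_comp (μ := μ) X f, Finset.sum_mul]
    _ = ∑ a, ∑ b, (if f a = b then pr μ X a else 0) * Real.logb 2 (pr μ (fun ω => f (X ω)) b) :=
        Finset.sum_comm
    _ = ∑ a, pr μ X a * Real.logb 2 (pr μ (fun ω => f (X ω)) (f a)) := by
        apply Finset.sum_congr rfl
        intro a _
        rw [show (fun b => (if f a = b then pr μ X a else 0) * Real.logb 2 (pr μ (fun ω => f (X ω)) b))
            = fun b => (if f a = b then pr μ X a * Real.logb 2 (pr μ (fun ω => f (X ω)) b) else 0) by
          funext b; split_ifs <;> simp]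
        rw [Finset.sum_ite_eq Finset.univ (f a)
          (fun b => pr μ X a * Real.logb 2 (pr μ (fun ω => f (X ω)) b))]
        simp

lemma entH_comp_le (h : ∀ ω, 0 ≤ μ ω) (X : Ω → α) (f : α → β) :
    entH μ (fun ω => f (X ω)) ≤ entH μ X := by
  rw [entH_comp X f]
  unfold entH
  rw [neg_le_neg_iff]
  apply Finset.sum_le_sum
  intro a _
  rcases eq_or_lt_of_le (pr_nonneg h X a) with h0 | h0
  · rw [← h0]; simp
  · apply mul_le_mul_of_nonneg_left _ (le_of_lt h0)
    exact Real.logb_le_logb_of_le one_lt_two h0 (pr_le_pr_comp h X f a)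

lemma entH_comp_inj (X : Ω → α) {f : α → β} (hf : Function.Injective f) :
    entH μ (fun ω => f (X ω)) = entH μ X := by
  rw [entH_comp X f]
  unfold entH
  congr 1
  apply Finset.sum_congr rfl
  intro a _
  congr 2
  unfold pr
  apply Finset.sum_congr rfl
  intro ω _
  simp [hf.eq_iff]

lemma condH_nonneg (h : ∀ ω, 0 ≤ μ ω) (X : Ω → α) (Y : Ω → β) : 0 ≤ condH μ X Y := by
  have h1 : entH μ (fun ω => Prod.snd ((X ω, Y ω))) ≤ entH μ (fun ω => (X ω, Y ω)) :=
    entH_comp_le h (fun ω => (X ω, Y ω)) Prod.snd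
  unfold condH
  have h2 : entH μ (fun ω => Prod.snd ((X ω, Y ω))) = entH μ Y := rfl
  linarith [h1, h2]

lemma condH_chain (X : Ω → α) (Y : Ω → β) (Z : Ω → γ) :
    condH μ (fun ω => (X ω, Y ω)) Z = condH μ X Z + condH μ Y (fun ω => (X ω, Z ω)) := by
  unfold condH
  have h : entH μ (fun ω => (Y ω, (X ω, Z ω))) = entH μ (fun ω => ((X ω, Y ω), Z ω)) := by
    have hinj : Function.Injective (fun p : (α × β) × γ => (p.1.2, (p.1.1, p.2))) := by
      intro p q hpq
      simp only [Prod.mk.injEq] at hpq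
      ext
      · exact hpq.2.1
      · exact hpq.1
      · exact hpq.2.2
    have h' := entH_comp_inj (μ := μ) (fun ω => ((X ω, Y ω), Z ω)) hinj
    exact h'
  rw [← h]
  ring

lemma condH_cond_inj (X : Ω → α) (W : Ω → β) {f : β → γ} (hf : Function.Injective f) :
    condH μ X (fun ω => f (W ω)) = condH μ X W := by
  unfold condH
  have h1 : entH μ (fun ω => (X ω, f (W ω))) = entH μ (fun ω => (X ω, W ω)) := by
    have hinj : Function.Injective (fun p : α × β => (p.1, f p.2)) := by
      intro p q hpq
      simp only [Prod.mk.injEq] at hpq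
      exact Prod.ext hpq.1 (hf hpq.2)
    have h' := entH_comp_inj (μ := μ) (fun ω => (X ω, W ω)) hinj
    exact h'
  rw [h1, entH_comp_inj W hf]

lemma condH_left_inj (X : Ω → α) (W : Ω → γ) {f : α → β} (hf : Function.Injective f) :
    condH μ (fun ω => f (X ω)) W = condH μ X W := by
  unfold condH
  have hinj : Function.Injective (fun p : α × γ => (f p.1, p.2)) := by
    intro p q hpq
    simp only [Prod.mk.injEq] at hpq
    exact Prod.ext (hf hpq.1) hpq.2
  have h' := entH_comp_inj (μ := μ) (fun ω => (X ω, W ω)) hinj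
  rw [h']

lemma pr_marg_xy (X : Ω → α) (Y : Ω → β) (Z : Ω → γ) (a : α) (b : β) :
    pr μ (fun ω => (X ω, Y ω)) (a, b) = ∑ c, pr μ (fun ω => (X ω, Y ω, Z ω)) (a, b, c) := by
  unfold pr
  rw [Finset.sum_comm]
  apply Finset.sum_congr rfl
  intro ω _
  simp [Prod.ext_iff, ite_and, Finset.sum_ite_eq]

lemma pr_marg_yz (X : Ω → α) (Y : Ω → β) (Z : Ω → γ) (b : β) (c : γ) :
    pr μ (fun ω => (Y ω, Z ω)) (b, c) = ∑ a, pr μ (fun ω => (X ω, Y ω, Z ω)) (a, b, c) := by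
  unfold pr
  rw [Finset.sum_comm]
  apply Finset.sum_congr rfl
  intro ω _
  simp [Prod.ext_iff, ite_and, Finset.sum_ite_eq]

lemma pr_marg_snd (X : Ω → α) (Y : Ω → β) (b : β) :
    pr μ Y b = ∑ a, pr μ (fun ω => (X ω, Y ω)) (a, b) := by
  unfold pr
  rw [Finset.sum_comm]
  apply Finset.sum_congr rfl
  intro ω _
  simp [Prod.ext_iff, ite_and, Finset.sum_ite_eq]

lemma pr_marg_fst (X : Ω → α) (Y : Ω → β) (a : α) :
    pr μ X a = ∑ b, pr μ (fun ω => (X ω, Y ω)) (a, b) := by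
  unfold pr
  rw [Finset.sum_comm]
  apply Finset.sum_congr rfl
  intro ω _
  simp [Prod.ext_iff, ite_and, Finset.sum_ite_eq]

lemma pr_marg_y (X : Ω → α) (Y : Ω → β) (Z : Ω → γ) (b : β) :
    pr μ Y b = ∑ a, ∑ c, pr μ (fun ω => (X ω, Y ω, Z ω)) (a, b, c) := by
  rw [pr_marg_snd X Y b]
  exact Finset.sum_congr rfl fun a _ => pr_marg_xy X Y Z a b

lemma condH_pair_le (hμ : IsPMF μ) (X : Ω → α) (Y : Ω → β) (Z : Ω → γ) :
    condH μ X (fun ω => (Y ω, Z ω)) ≤ condH μ X Y := by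
  classical
  set T : Ω → α × β × γ := fun ω => (X ω, Y ω, Z ω) with hT
  set p : α × β × γ → ℝ := pr μ T with hp
  set pxy : α → β → ℝ := fun a b => pr μ (fun ω => (X ω, Y ω)) (a, b) with hpxy
  set pyz : β → γ → ℝ := fun b c => pr μ (fun ω => (Y ω, Z ω)) (b, c) with hpyz
  set py : β → ℝ := fun b => pr μ Y b with hpy
  -- basic positivity facts
  have hpnn : ∀ t, 0 ≤ p t := fun t => pr_nonneg hμ.1 T t
  have hp_le_xy : ∀ t : α × β × γ, p t ≤ pxy t.1 t.2.1 := by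
    intro t
    have := pr_le_pr_comp (μ := μ) hμ.1 T (fun t => (t.1, t.2.1)) t
    exact this
  have hp_le_yz : ∀ t : α × β × γ, p t ≤ pyz t.2.1 t.2.2 := by
    intro t
    have := pr_le_pr_comp (μ := μ) hμ.1 T (fun t => t.2) t
    exact this
  have hp_le_y : ∀ t : α × β × γ, p t ≤ py t.2.1 := by
    intro t
    have := pr_le_pr_comp (μ := μ) hμ.1 T (fun t => t.2.1) t
    exact this
  -- the upper-bound function q
  set q : α × β × γ → ℝ := fun t =>
    if py t.2.1 = 0 then 0 else pxy t.1 t.2.1 * pyz t.2.1 t.2.2 / py t.2.1 with hq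
  have hqnn : ∀ t, 0 ≤ q t := by
    intro t
    rw [hq]
    dsimp only
    split_ifs with h0
    · exact le_refl 0
    · apply div_nonneg
      · exact mul_nonneg (pr_nonneg hμ.1 _ _) (pr_nonneg hμ.1 _ _)
      · exact pr_nonneg hμ.1 _ _
  -- termwise bound
  have key : ∀ t : α × β × γ,
      p t * (Real.logb 2 (pxy t.1 t.2.1) + Real.logb 2 (pyz t.2.1 t.2.2)
        - Real.logb 2 (py t.2.1) - Real.logb 2 (p t)) ≤ (q t - p t) / Real.log 2 := by
    intro t
    rcases eq_or_lt_of_le (hpnn t) with h0 | h0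
    · rw [← h0]
      simp only [zero_mul, sub_zero]
      apply div_nonneg (hqnn t) (Real.log_nonneg one_le_two)
    · have hxy0 : 0 < pxy t.1 t.2.1 := lt_of_lt_of_le h0 (hp_le_xy t)
      have hyz0 : 0 < pyz t.2.1 t.2.2 := lt_of_lt_of_le h0 (hp_le_yz t)
      have hy0 : 0 < py t.2.1 := lt_of_lt_of_le h0 (hp_le_y t)
      have hqt : q t = pxy t.1 t.2.1 * pyz t.2.1 t.2.2 / py t.2.1 := by
        rw [hq]; dsimp only; rw [if_neg (ne_of_gt hy0)]
      have hqpos : 0 < q t := by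
        rw [hqt]; positivity
      have hlog : Real.log (q t / p t) ≤ q t / p t - 1 :=
        Real.log_le_sub_one_of_pos (by positivity)
      have hexp : Real.logb 2 (pxy t.1 t.2.1) + Real.logb 2 (pyz t.2.1 t.2.2)
          - Real.logb 2 (py t.2.1) - Real.logb 2 (p t) = Real.log (q t / p t) / Real.log 2 := by
        rw [hqt]
        unfold Real.logb
        rw [Real.log_div (by positivity) (ne_of_gt h0),
          Real.log_div (by positivity) (ne_of_gt hy0),
          Real.log_mul (ne_of_gt hxy0) (ne_of_gt hyz0)]
        ring
      rw [hexp]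
      have hlog2 : 0 < Real.log 2 := Real.log_pos one_lt_two
      calc p t * (Real.log (q t / p t) / Real.log 2)
          = (p t * Real.log (q t / p t)) / Real.log 2 := by ring
        _ ≤ (p t * (q t / p t - 1)) / Real.log 2 := by
            gcongr
        _ = (q t - p t) / Real.log 2 := by
            rw [mul_sub, mul_div_cancel₀ _ (ne_of_gt h0)]
            ring
  -- sums
  have hsum_p : ∑ t, p t = 1 := by rw [hp, sum_pr T, hμ.2]
  have hsum_q : ∑ t, q t ≤ 1 := by
    have hqt : ∑ t, q t = ∑ a, ∑ b, ∑ c, q (a, b, c) := by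
      rw [Fintype.sum_prod_type]
      exact Finset.sum_congr rfl fun a _ => Fintype.sum_prod_type _
    rw [hqt, Finset.sum_comm]
    have hb : ∀ b : β, (∑ a, ∑ c, q (a, b, c)) ≤ py b := by
      intro b
      by_cases h0 : py b = 0
      · simp only [hq, h0, if_true, reduceIte]
        simp [h0, pr_nonneg hμ.1]
      · have h1 : ∑ a, pxy a b = py b := by
          rw [hpy]
          dsimp only
          rw [pr_marg_y X Y Z b]
          exact Finset.sum_congr rfl fun a _ => pr_marg_xy X Y Z a b
        have h2 : ∑ c, pyz b c = py b := by
          rw [hpy]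
          dsimp only
          rw [pr_marg_y X Y Z b, Finset.sum_comm]
          exact Finset.sum_congr rfl fun c _ => pr_marg_yz X Y Z b c
        have : ∑ a, ∑ c, q (a, b, c) = (∑ a, pxy a b) * (∑ c, pyz b c) / py b := by
          simp only [hq, if_neg h0]
          symm
          rw [Finset.sum_mul, Finset.sum_div]
          exact Finset.sum_congr rfl fun a _ => by
            rw [Finset.mul_sum, Finset.sum_div]
        rw [this, h1, h2, mul_div_assoc, div_self h0, mul_one]
    calc ∑ b, ∑ a, ∑ c, q (a, b, c) ≤ ∑ b, py b := Finset.sum_le_sum fun b _ => hb b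
      _ = 1 := by rw [hpy]; dsimp only; rw [sum_pr Y, hμ.2]
  have S : ∑ t : α × β × γ, p t * (Real.logb 2 (pxy t.1 t.2.1) + Real.logb 2 (pyz t.2.1 t.2.2)
        - Real.logb 2 (py t.2.1) - Real.logb 2 (p t))
      ≤ ∑ t : α × β × γ, (q t - p t) / Real.log 2 :=
    Finset.sum_le_sum fun t _ => key t
  have S0 : ∑ t : α × β × γ, (q t - p t) / Real.log 2 ≤ 0 := by
    rw [← Finset.sum_div, Finset.sum_sub_distrib, hsum_p]
    apply div_nonpos_of_nonpos_of_nonneg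
    · linarith
    · exact Real.log_nonneg one_le_two
  have hS : ∑ t : α × β × γ, p t * (Real.logb 2 (pxy t.1 t.2.1) + Real.logb 2 (pyz t.2.1 t.2.2)
        - Real.logb 2 (py t.2.1) - Real.logb 2 (p t))
      = (∑ t : α × β × γ, p t * Real.logb 2 (pxy t.1 t.2.1))
        + (∑ t : α × β × γ, p t * Real.logb 2 (pyz t.2.1 t.2.2))
        - (∑ t : α × β × γ, p t * Real.logb 2 (py t.2.1))
        - (∑ t : α × β × γ, p t * Real.logb 2 (p t)) := by
    rw [← Finset.sum_add_distrib, ← Finset.sum_sub_distrib, ← Finset.sum_sub_distrib]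
    exact Finset.sum_congr rfl fun t _ => by ring
  -- entropy representations
  have e1 : entH μ (fun ω => (X ω, Y ω, Z ω)) = -∑ t : α × β × γ, p t * Real.logb 2 (p t) := by
    rw [hp, hT]; rfl
  have e2 : entH μ (fun ω => (Y ω, Z ω))
      = -∑ t : α × β × γ, p t * Real.logb 2 (pyz t.2.1 t.2.2) := by
    have h := entH_comp (μ := μ) T (fun t => t.2)
    exact h
  have e3 : entH μ (fun ω => (X ω, Y ω))
      = -∑ t : α × β × γ, p t * Real.logb 2 (pxy t.1 t.2.1) := by
    have h := entH_comp (μ := μ) T (fun t => (t.1, t.2.1))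
    exact h
  have e4 : entH μ Y = -∑ t : α × β × γ, p t * Real.logb 2 (py t.2.1) := by
    have h := entH_comp (μ := μ) T (fun t => t.2.1)
    exact h
  have goal_eq : condH μ X (fun ω => (Y ω, Z ω))
      = entH μ (fun ω => (X ω, Y ω, Z ω)) - entH μ (fun ω => (Y ω, Z ω)) := rfl
  have goal_eq2 : condH μ X Y = entH μ (fun ω => (X ω, Y ω)) - entH μ Y := rfl
  rw [goal_eq, goal_eq2, e1, e2, e3, e4]
  linarith [S, S0, hS]

lemma entH_const (hμ : IsPMF μ) : entH μ (fun _ : Ω => (0 : Fin 1)) = 0 := by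
  unfold entH pr
  simp [hμ.2]

lemma condH_const (hμ : IsPMF μ) (X : Ω → α) :
    condH μ X (fun _ : Ω => (0 : Fin 1)) = entH μ X := by
  unfold condH
  rw [entH_const hμ]
  have h := entH_comp_inj (μ := μ) X (f := fun a => (a, (0 : Fin 1)))
    (fun a b h => by simpa using congrArg Prod.fst h)
  rw [h]
  ring

lemma condH_le_entH (hμ : IsPMF μ) (X : Ω → α) (Z : Ω → β) :
    condH μ X Z ≤ entH μ X := by
  have h1 : condH μ X (fun ω => ((0 : Fin 1), Z ω)) ≤ condH μ X (fun _ : Ω => (0 : Fin 1)) :=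
    condH_pair_le hμ X _ Z
  have h2 := condH_cond_inj (μ := μ) X Z (f := fun z => ((0 : Fin 1), z))
    (fun a b h => by simpa using congrArg Prod.snd h)
  rw [h2] at h1
  rw [condH_const hμ X] at h1
  exact h1

lemma condH_indep (hμ : IsPMF μ) (X : Ω → α) (Z : Ω → β) (h : IndepRV μ X Z) :
    condH μ X Z = entH μ X := by
  unfold condH entH
  have hsplit : ∀ (a : α) (b : β), pr μ X a * pr μ Z b * Real.logb 2 (pr μ X a * pr μ Z b)
      = pr μ Z b * (pr μ X a * Real.logb 2 (pr μ X a))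
        + pr μ X a * (pr μ Z b * Real.logb 2 (pr μ Z b)) := by
    intro a b
    rcases eq_or_ne (pr μ X a) 0 with h1 | h1
    · simp [h1]
    rcases eq_or_ne (pr μ Z b) 0 with h2 | h2
    · simp [h2]
    rw [Real.logb_mul h1 h2]
    ring
  have hX1 : ∑ a, pr μ X a = 1 := by rw [sum_pr X, hμ.2]
  have hZ1 : ∑ b, pr μ Z b = 1 := by rw [sum_pr Z, hμ.2]
  have hpair : ∑ t : α × β, pr μ (fun ω => (X ω, Z ω)) t
        * Real.logb 2 (pr μ (fun ω => (X ω, Z ω)) t)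
      = (∑ a, pr μ X a * Real.logb 2 (pr μ X a))
        + (∑ b, pr μ Z b * Real.logb 2 (pr μ Z b)) := by
    rw [Fintype.sum_prod_type]
    have : ∀ (a : α) (b : β), pr μ (fun ω => (X ω, Z ω)) (a, b)
        * Real.logb 2 (pr μ (fun ω => (X ω, Z ω)) (a, b))
        = pr μ Z b * (pr μ X a * Real.logb 2 (pr μ X a))
          + pr μ X a * (pr μ Z b * Real.logb 2 (pr μ Z b)) := by
      intro a b
      rw [h a b]
      exact hsplit a b
    simp only [this]
    simp only [Finset.sum_add_distrib]
    congr 1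
    · apply Finset.sum_congr rfl
      intro a _
      rw [← Finset.sum_mul, hZ1, one_mul]
    · rw [Finset.sum_comm]
      apply Finset.sum_congr rfl
      intro b _
      rw [← Finset.sum_mul, hX1, one_mul]
  rw [hpair]
  ring

end EntropyToolkit

/-- if `H(X_{W'} | A, Q, Y') = 0`, `H(X_{W''} | A, Q, Y'') = 0`,
`X_{W'}` is independent of `(Q, Y', Y'')`, and `X_{W''}` is independent of
`(Q, X_{W'}, Y', Y'')`, then `H(A) ≥ H(X_{W'}) + H(X_{W''})`. -/
theorem stmt11 {Ω α β β' γ δ δ' : Type*} [Fintype Ω]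
    [Fintype α] [DecidableEq α] [Fintype β] [DecidableEq β]
    [Fintype β'] [DecidableEq β'] [Fintype γ] [DecidableEq γ]
    [Fintype δ] [DecidableEq δ] [Fintype δ'] [DecidableEq δ']
    (μ : Ω → ℝ) (hμ : IsPMF μ)
    (A : Ω → γ) (Q : Ω → α) (Y' : Ω → β) (Y'' : Ω → β')
    (XW' : Ω → δ) (XW'' : Ω → δ')
    (hrec' : condH μ XW' (fun ω => (A ω, Q ω, Y' ω)) = 0)
    (hrec'' : condH μ XW'' (fun ω => (A ω, Q ω, Y'' ω)) = 0)
    (hind' : IndepRV μ XW' (fun ω => (Q ω, Y' ω, Y'' ω)))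
    (hind'' : IndepRV μ XW'' (fun ω => (Q ω, XW' ω, Y' ω, Y'' ω))) :
    entH μ A ≥ entH μ XW' + entH μ XW'' := by
  classical
  -- Step A : H(XW',XW'' | Q,Y',Y'') = H(XW') + H(XW'')
  have stepA : condH μ (fun ω => (XW' ω, XW'' ω)) (fun ω => (Q ω, Y' ω, Y'' ω))
      = entH μ XW' + entH μ XW'' := by
    have hc := condH_chain (μ := μ) XW' XW'' (fun ω => (Q ω, Y' ω, Y'' ω))
    have h1 : condH μ XW' (fun ω => (Q ω, Y' ω, Y'' ω)) = entH μ XW' :=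
      condH_indep hμ XW' _ hind'
    have hswap : Function.Injective
        (fun p : δ × (α × β × β') => (p.2.1, p.1, p.2.2.1, p.2.2.2)) :=
      Function.LeftInverse.injective
        (g := fun s : α × δ × β × β' => (s.2.1, s.1, s.2.2.1, s.2.2.2)) (fun t => rfl)
    have h2' := condH_cond_inj (μ := μ) XW''
      (fun ω => (XW' ω, Q ω, Y' ω, Y'' ω)) hswap
    have h2 : condH μ XW'' (fun ω => (XW' ω, Q ω, Y' ω, Y'' ω)) = entH μ XW'' := by
      rw [← h2']
      have h3 : condH μ XW'' (fun ω => (Q ω, XW' ω, Y' ω, Y'' ω)) = entH μ XW'' :=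
        condH_indep hμ XW'' _ hind''
      exact h3
    rw [hc, h1, h2]
  -- Step C1 : H(XW' | A,Q,Y',Y'') ≤ 0
  have stepC1 : condH μ XW' (fun ω => (A ω, Q ω, Y' ω, Y'' ω)) ≤ 0 := by
    have hre : Function.Injective
        (fun t : γ × α × β × β' => ((t.1, t.2.1, t.2.2.1), t.2.2.2)) :=
      Function.LeftInverse.injective
        (g := fun s : (γ × α × β) × β' => (s.1.1, s.1.2.1, s.1.2.2, s.2)) (fun t => rfl)
    have he := condH_cond_inj (μ := μ) XW' (fun ω => (A ω, Q ω, Y' ω, Y'' ω)) hre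
    have hle := condH_pair_le hμ XW' (fun ω => (A ω, Q ω, Y' ω)) Y''
    rw [hrec'] at hle
    rw [he] at hle
    exact hle
  -- Step C1'' : H(XW'' | A,Q,Y',Y'') ≤ 0
  have stepC1'' : condH μ XW'' (fun ω => (A ω, Q ω, Y' ω, Y'' ω)) ≤ 0 := by
    have hre : Function.Injective
        (fun t : γ × α × β × β' => ((t.1, t.2.1, t.2.2.2), t.2.2.1)) :=
      Function.LeftInverse.injective
        (g := fun s : (γ × α × β') × β => (s.1.1, s.1.2.1, s.2, s.1.2.2)) (fun t => rfl)
    have he := condH_cond_inj (μ := μ) XW'' (fun ω => (A ω, Q ω, Y' ω, Y'' ω)) hre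
    have hle := condH_pair_le hμ XW'' (fun ω => (A ω, Q ω, Y'' ω)) Y'
    rw [hrec''] at hle
    rw [he] at hle
    exact hle
  -- Step C : H(XW',XW'' | A,Q,Y',Y'') ≤ 0
  have stepC : condH μ (fun ω => (XW' ω, XW'' ω)) (fun ω => (A ω, Q ω, Y' ω, Y'' ω)) ≤ 0 := by
    have hc := condH_chain (μ := μ) XW' XW'' (fun ω => (A ω, Q ω, Y' ω, Y'' ω))
    have hswap : Function.Injective
        (fun p : δ × (γ × α × β × β') => (p.2, p.1)) :=
      Function.LeftInverse.injective
        (g := fun s : (γ × α × β × β') × δ => (s.2, s.1)) (fun t => rfl)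
    have he := condH_cond_inj (μ := μ) XW''
      (fun ω => (XW' ω, A ω, Q ω, Y' ω, Y'' ω)) hswap
    have hle2 := condH_pair_le hμ XW'' (fun ω => (A ω, Q ω, Y' ω, Y'' ω)) XW'
    rw [he] at hle2
    have : condH μ XW'' (fun ω => (XW' ω, A ω, Q ω, Y' ω, Y'' ω)) ≤ 0 :=
      le_trans hle2 stepC1''
    linarith [hc, stepC1, this]
  -- Step B : chain on (XW',XW'') and A over Z
  have stepB : condH μ (fun ω => (XW' ω, XW'' ω)) (fun ω => (Q ω, Y' ω, Y'' ω))
      ≤ entH μ A + condH μ (fun ω => (XW' ω, XW'' ω)) (fun ω => (A ω, Q ω, Y' ω, Y'' ω)) := by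
    have hc1 := condH_chain (μ := μ) (fun ω => (XW' ω, XW'' ω)) A (fun ω => (Q ω, Y' ω, Y'' ω))
    have hc2 := condH_chain (μ := μ) A (fun ω => (XW' ω, XW'' ω)) (fun ω => (Q ω, Y' ω, Y'' ω))
    have hswap : Function.Injective
        (fun p : (δ × δ') × γ => (p.2, p.1)) :=
      Function.LeftInverse.injective (g := fun s : γ × δ × δ' => (s.2, s.1)) (fun t => rfl)
    have he := condH_left_inj (μ := μ) (W := fun ω => (Q ω, Y' ω, Y'' ω))
      (fun ω => ((XW' ω, XW'' ω), A ω)) hswap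
    -- he : condH μ (fun ω => (A ω, (XW' ω, XW'' ω))) Z = condH μ (fun ω => ((XW' ω,XW'' ω), A ω)) Z
    have hnn := condH_nonneg hμ.1 A
      (fun ω => ((XW' ω, XW'' ω), Q ω, Y' ω, Y'' ω))
    have hAZ := condH_le_entH hμ A (fun ω => (Q ω, Y' ω, Y'' ω))
    linarith [hc1, hc2, he, hnn, hAZ]
  linarith [stepA, stepB, stepC]
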